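/- arXiv:2110.12928 — 2 statements merged into one kernel-verified Lean document; each statement's English description precedes it below -/
import Mathlib

section
/- Let T be a search tree on the caterpillar C(m_1,...,m_n) and let ℓ_{i,j} be a leg node of T. If ℓ_{i,j} has no children, then its parent in T is the spine node s_i. Otherwise, ℓ_{i,j} has exactly one child in T, and s_i is a descendant of ℓ_{i,j} in T. -/
/-- A rooted tree (or the empty tree) on a subset `supp` of the vertex type `V`,
represented by parent pointers. -/
structure RTree (V : Type) where
  supp : Finset V
  parent : V → Option V
  parent_eq_none : ∀ v ∉ supp, parent v = none
  mem_of_parent : ∀ {v w : V}, parent v = some w → v ∈ supp ∧ w ∈ supp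
  root_unique : ∀ v ∈ supp, ∀ w ∈ supp, parent v = none → parent w = none → v = w
  reaches_root : ∀ v ∈ supp, ∃ r ∈ supp, parent r = none ∧
    Relation.ReflTransGen (fun a b => parent a = some b) v r

namespace RTree

variable {V : Type}

/-- `T.Anc a v` : `a` is an ancestor of `v` in `T` (possibly `a = v`). -/
def Anc (T : RTree V) (a v : V) : Prop :=
  Relation.ReflTransGen (fun x y => T.parent x = some y) v a

/-- `a` is a strict ancestor of `v`. -/
def StrictAnc (T : RTree V) (a v : V) : Prop := a ≠ v ∧ T.Anc a v

/-- The set of vertices of the subtree rooted at `a` (the descendants of `a`). -/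
def descSet (T : RTree V) (a : V) : Set V := {v | T.Anc a v}

/-- The depth of a node: the number of nodes on the path from the root to it
(the root has depth 1). -/
noncomputable def depth (T : RTree V) (v : V) : ℕ := Set.ncard {a | T.Anc a v}

def IsRoot (T : RTree V) (r : V) : Prop := r ∈ T.supp ∧ T.parent r = none

end RTree

/-- The restriction of a graph to a set of vertices (keeping the ambient vertex type). -/
def restrictG {V : Type} (G : SimpleGraph V) (U : Set V) : SimpleGraph V where
  Adj a b := G.Adj a b ∧ a ∈ U ∧ b ∈ U
  symm := ⟨fun a b ⟨h, ha, hb⟩ => ⟨h.symm, hb, ha⟩⟩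
  loopless := ⟨fun a ⟨h, _, _⟩ => G.loopless.irrefl a h⟩

/-- `T` is a search tree on the induced subgraph `G[U]`: its nodes are the vertices of `U`,
the subtree of every node induces a connected subgraph, and every edge of `G[U]` joins
two comparable nodes of `T`. -/
def IsSTGOn {V : Type} (G : SimpleGraph V) (U : Finset V) (T : RTree V) : Prop :=
  T.supp = U ∧
  (∀ v ∈ U, ((restrictG G ↑U).induce (T.descSet v)).Connected) ∧
  (∀ u v : V, u ∈ U → v ∈ U → G.Adj u v → T.Anc u v ∨ T.Anc v u)

/-- `T` is a search tree on the graph `G`. -/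
def IsSTG {V : Type} [Fintype V] (G : SimpleGraph V) (T : RTree V) : Prop :=
  IsSTGOn G Finset.univ T

/-- `T'` is obtained from `T` by rotating the edge `(p, c)` of `T`, where `p` is
the parent of `c`: `c` replaces `p` (becoming a child of `p`'s former parent, or the
root if `p` was the root), `p` becomes a child of `c`, `p` keeps its other children,
and each child `x` of `c` whose subtree contains a vertex of `G` adjacent to `p`
becomes a child of `p` (the other children of `c` stay children of `c`). -/
def IsRotationAt {V : Type} (G : SimpleGraph V) (T T' : RTree V) (p c : V) : Prop :=
  T.parent c = some p ∧
  T'.supp = T.supp ∧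
  T'.parent c = T.parent p ∧
  T'.parent p = some c ∧
  (∀ x : V, x ≠ p → T.parent x = some c →
    ((∃ u ∈ T.descSet x, G.Adj u p) → T'.parent x = some p) ∧
    (¬(∃ u ∈ T.descSet x, G.Adj u p) → T'.parent x = some c)) ∧
  (∀ x : V, x ≠ c → x ≠ p → T.parent x ≠ some c → T'.parent x = T.parent x)

/-- `T'` is obtained from `T` by a single rotation. -/
def IsRotation {V : Type} (G : SimpleGraph V) (T T' : RTree V) : Prop :=
  ∃ p c, IsRotationAt G T T' p c

/-- `T2` can be obtained from `T1` by exactly `k` rotations. -/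
def ReachesIn {V : Type} (G : SimpleGraph V) : ℕ → RTree V → RTree V → Prop
  | 0, T1, T2 => T1 = T2
  | k+1, T1, T2 => ∃ T', IsRotation G T1 T' ∧ ReachesIn G k T' T2

/-- Vertex type of the caterpillar `C(m_1, …, m_n)`: spine vertices `inl i` and
leg vertices `inr ⟨i, j⟩`. -/
abbrev CatV (n : ℕ) (m : Fin n → ℕ) : Type := Fin n ⊕ (Σ i : Fin n, Fin (m i))

/-- The caterpillar tree `C(m_1, …, m_n)`: the spine `s_1 - s_2 - ⋯ - s_n` is a path,
and leg `ℓ_{i,j}` is adjacent to `s_i`. -/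
def caterpillar (n : ℕ) (m : Fin n → ℕ) : SimpleGraph (CatV n m) where
  Adj x y :=
    match x, y with
    | Sum.inl i, Sum.inl j => i.val + 1 = j.val ∨ j.val + 1 = i.val
    | Sum.inl i, Sum.inr l => l.1 = i
    | Sum.inr l, Sum.inl i => l.1 = i
    | Sum.inr _, Sum.inr _ => False
  symm := ⟨by rintro (i | l) (j | l') h <;> simp_all <;> tauto⟩
  loopless := ⟨by rintro (i | l) h <;> simp_all⟩

/-- The (base 2) Shannon entropy `H(m_1, …, m_n) = ∑_{i : m_i > 0} (m_i/m) log (m/m_i)`. -/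
noncomputable def shannonH {n : ℕ} (m : Fin n → ℕ) : ℝ :=
  ∑ i, if 0 < m i then
    ((m i : ℝ) / (∑ j, (m j : ℝ))) * Real.logb 2 ((∑ j, (m j : ℝ)) / (m i : ℝ))
  else 0

/-- The parent function of the search tree `A(S, π)` on the caterpillar: the legs form a
path at the top of the tree, ordered bottom-to-top according to `π`, and the spine nodes
hang below, arranged according to the BST `S`. -/
def AParent {n : ℕ} {m : Fin n → ℕ} (S : RTree (Fin n))
    (π : Fin (∑ i, m i) ≃ (Σ i : Fin n, Fin (m i))) :
    CatV n m → Option (CatV n m) :=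
  fun x => match x with
  | Sum.inl i =>
      match S.parent i with
      | some j => some (Sum.inl j)
      | none => if h : 0 < ∑ i, m i then some (Sum.inr (π ⟨0, h⟩)) else none
  | Sum.inr l =>
      if h : (π.symm l).val + 1 < ∑ i, m i then
        some (Sum.inr (π ⟨(π.symm l).val + 1, h⟩))
      else none

/-- `T = A(S, π)`. -/
def IsA {n : ℕ} {m : Fin n → ℕ} (S : RTree (Fin n))
    (π : Fin (∑ i, m i) ≃ (Σ i : Fin n, Fin (m i))) (T : RTree (CatV n m)) : Prop :=
  T.supp = Finset.univ ∧ T.parent = AParent S π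

/-- The parent function of the search tree `B(S)` on the caterpillar: every leg `ℓ_{i,j}`
is a (childless) child of `s_i`, and the spine nodes are arranged according to `S`. -/
def BParent {n : ℕ} {m : Fin n → ℕ} (S : RTree (Fin n)) :
    CatV n m → Option (CatV n m) :=
  fun x => match x with
  | Sum.inl i => (S.parent i).map Sum.inl
  | Sum.inr l => some (Sum.inl l.1)

/-- `T = B(S)`. -/
def IsB {n : ℕ} {m : Fin n → ℕ} (S : RTree (Fin n)) (T : RTree (CatV n m)) : Prop :=
  T.supp = Finset.univ ∧ T.parent = BParent S

/-- `σ(π)`: the sequence of spine indices obtained from the leg ordering `π` by replacing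
each leg `ℓ_{i,j}` with `i`. -/
def sigmaOf {n : ℕ} {m : Fin n → ℕ}
    (π : Fin (∑ i, m i) ≃ (Σ i : Fin n, Fin (m i))) : List (Fin n) :=
  List.ofFn (fun j => (π j).1)

/-- Every leg node of `T` is bound, i.e. no leg node has a child. -/
def noFreeLegs {n : ℕ} {m : Fin n → ℕ} (T : RTree (CatV n m)) : Prop :=
  ∀ (x : CatV n m) (l : Σ i : Fin n, Fin (m i)), T.parent x ≠ some (Sum.inr l)

open Classical in
/-- The number of adjacent pairs in a list satisfying `P`. -/
noncomputable def pairAlt {α : Type} (P : α → α → Prop) : List α → ℕ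
  | [] => 0
  | [_] => 0
  | a :: b :: t => (if P a b then 1 else 0) + pairAlt P (b :: t)

open Classical in
/-- Wilber's quantity `λ(S, u, σ)`: 0 if `u` has at most one child; otherwise the number
of adjacent pairs in the restriction of `σ` to the subtree of `u` that do not both lie in
the subtree of one child of `u` and are not both equal to `u`. -/
noncomputable def wilberLam {n : ℕ} (S : RTree (Fin n)) (u : Fin n) (σ : List (Fin n)) : ℕ :=
  if (∃ v w : Fin n, v ≠ w ∧ S.parent v = some u ∧ S.parent w = some u) then
    pairAlt (fun x y =>
      ¬((x = u ∧ y = u) ∨ ∃ ch, S.parent ch = some u ∧ S.Anc ch x ∧ S.Anc ch y))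
      (σ.filter (fun x => decide (S.Anc u x)))
  else 0

/-- `λ'(S, u, σ) = λ(S, u, σ)` plus the number of occurrences of `u` in `σ`. -/
noncomputable def wilberLam' {n : ℕ} (S : RTree (Fin n)) (u : Fin n)
    (σ : List (Fin n)) : ℕ :=
  wilberLam S u σ + σ.count u

/-- Wilber's first lower bound `Λ'(S, σ) = ∑_u λ'(S, u, σ)`. -/
noncomputable def wilberL' {n : ℕ} (S : RTree (Fin n)) (σ : List (Fin n)) : ℕ :=
  ∑ u : Fin n, wilberLam' S u σ

/-- `P` is the projection `T[U]` of `T` onto `U`: its nodes are the nodes of `T` in `U`,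
and the parent of `u` in `P` is the nearest strict ancestor of `u` in `T` that lies
in `U` (which is exactly the result of pruning the vertices outside `U` one by one). -/
def IsProjOn {V : Type} [DecidableEq V] (T : RTree V) (U : Finset V) (P : RTree V) : Prop :=
  P.supp = T.supp ∩ U ∧
  ∀ u w : V, P.parent u = some w ↔
    (u ∈ U ∧ w ∈ U ∧ T.StrictAnc w u ∧ ∀ z ∈ U, T.StrictAnc z u → T.Anc z w)

/-- `P` is obtained from `T` by pruning the vertex `v`. -/
def IsPruneOf {V : Type} [DecidableEq V] (T : RTree V) (v : V) (P : RTree V) : Prop :=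
  IsProjOn T (T.supp.erase v) P

/-- `PruneSeq T l P`: `P` is obtained from `T` by successively pruning the
vertices in the list `l`, in order. -/
def PruneSeq {V : Type} [DecidableEq V] : RTree V → List V → RTree V → Prop
  | T, [], P => P = T
  | T, v :: rest, P => ∃ P', IsPruneOf T v P' ∧ PruneSeq P' rest P

/-- The number of alternations (edges whose endpoints get different colors under `f`)
on the path from the root to `z`. -/
noncomputable def altAt {V K : Type} (f : V → K) (T : RTree V) (z : V) : ℕ :=
  Set.ncard {x | T.Anc x z ∧ ∃ y, T.parent x = some y ∧ f x ≠ f y}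

/-- The alternation number of `T` w.r.t. the coloring `f`: the maximum number of
alternations on a root-to-node path. -/
noncomputable def altNum {V K : Type} (f : V → K) (T : RTree V) : ℕ :=
  T.supp.sup (fun z => altAt f T z)

/-! The leg `ℓ_{i,j}` has the single neighbour `s_i`. In a search tree every child subtree of a
node `p` contains a neighbour of `p`, because the subtree of `p` is connected and an edge leaving
the child subtree inside it can only end at `p`. So every child subtree of `ℓ_{i,j}` contains
`s_i`, which forces at most one child; and if `ℓ_{i,j}` is a leaf, the neighbour of its parent
found in its subtree is `ℓ_{i,j}` itself, so the parent is `s_i`. -/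

open Relation

namespace RTree

variable {V : Type} {T : RTree V}

theorem parent_rightUnique : Relator.RightUnique (fun a b => T.parent a = some b) :=
  fun _ _ _ h₁ h₂ => Option.some.inj (h₁.symm.trans h₂)

theorem not_transGen_self_of_reflTransGen_root {v r : V}
    (hvr : ReflTransGen (fun a b => T.parent a = some b) v r) (hr : T.parent r = none) :
    ¬TransGen (fun a b => T.parent a = some b) v v := by
  induction hvr using ReflTransGen.head_induction_on with
  | refl =>
    intro h
    obtain ⟨_, hstep, _⟩ := TransGen.head'_iff.1 h
    simp [hr] at hstep
  | head hvw _ ih =>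
    intro h
    obtain ⟨w', hvw', hw'v⟩ := TransGen.head'_iff.1 h
    cases parent_rightUnique hvw hvw'
    exact ih (TransGen.tail' hw'v hvw)

theorem not_anc_of_parent_eq {c p : V} (hc : T.parent c = some p) : ¬T.Anc c p := by
  intro hpc
  obtain ⟨r, -, hr, hcr⟩ := T.reaches_root c (T.mem_of_parent hc).1
  exact not_transGen_self_of_reflTransGen_root hcr hr (TransGen.head' hc hpc)

theorem anc_antisymm {a b : V} (hab : T.Anc a b) (hba : T.Anc b a) : a = b := by
  rcases ReflTransGen.cases_head hab with h | ⟨x, hbx, hxa⟩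
  · exact h.symm
  · exact (not_anc_of_parent_eq hbx (hxa.trans hba)).elim

theorem eq_of_anc_of_forall_parent_ne {v u : V} (hleaf : ∀ x, T.parent x ≠ some v)
    (hvu : T.Anc v u) : u = v := by
  rcases ReflTransGen.cases_tail hvu with h | ⟨x, -, hxv⟩
  · exact h.symm
  · exact (hleaf x hxv).elim

theorem eq_of_parent_eq_of_anc {c c' p v : V} (hc : T.parent c = some p)
    (hc' : T.parent c' = some p) (hcv : T.Anc c v) (hc'v : T.Anc c' v) : c = c' := by
  have key : ∀ {d d' : V}, T.parent d = some p → T.parent d' = some p → T.Anc d' d → d = d' := by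
    intro d d' hd hd' hdd'
    rcases ReflTransGen.cases_head hdd' with h | ⟨x, hdx, hxd'⟩
    · exact h
    · cases parent_rightUnique hdx hd
      exact (not_anc_of_parent_eq hd' hxd').elim
  rcases ReflTransGen.total_of_right_unique parent_rightUnique hcv hc'v with h | h
  · exact key hc hc' h
  · exact (key hc' hc h).symm

theorem anc_of_anc_of_parent_eq {c p v u : V} (hc : T.parent c = some p) (hpv : T.Anc p v)
    (hvp : v ≠ p) (hvu : T.Anc v u) (hcu : T.Anc c u) : T.Anc c v := by
  rcases ReflTransGen.total_of_right_unique parent_rightUnique hcu hvu with h | h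
  · rcases ReflTransGen.cases_head h with rfl | ⟨x, hcx, hxv⟩
    · exact ReflTransGen.refl
    · cases parent_rightUnique hcx hc
      exact (hvp (anc_antisymm hxv hpv)).elim
  · exact h

end RTree

theorem IsSTGOn.exists_adj_of_parent_eq {V : Type} {G : SimpleGraph V} {U : Finset V}
    {T : RTree V} (hT : IsSTGOn G U T) {c p : V} (hc : T.parent c = some p) :
    ∃ u ∈ T.descSet c, G.Adj u p := by
  obtain ⟨hsupp, hconn, hcomp⟩ := hT
  have hpU : p ∈ U := hsupp ▸ (T.mem_of_parent hc).2
  obtain ⟨walk⟩ := (hconn p hpU).preconnected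
    ⟨c, ReflTransGen.single hc⟩ ⟨p, ReflTransGen.refl⟩
  obtain ⟨d, -, hfst, hsnd⟩ := walk.exists_boundary_dart {x | T.Anc c x}
    ReflTransGen.refl (RTree.not_anc_of_parent_eq hc)
  obtain ⟨hadj, hfstU, hsndU⟩ : G.Adj d.fst.1 d.snd.1 ∧ d.fst.1 ∈ U ∧ d.snd.1 ∈ U := d.adj
  refine ⟨d.fst, hfst, ?_⟩
  by_cases hsnd_p : d.snd.1 = p
  · rwa [hsnd_p] at hadj
  rcases hcomp _ _ hfstU hsndU hadj with h | h
  · exact (hsnd (ReflTransGen.trans h hfst)).elim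
  · exact (hsnd (RTree.anc_of_anc_of_parent_eq hc d.snd.2 hsnd_p h hfst)).elim

theorem caterpillar_adj_inr_iff {n : ℕ} {m : Fin n → ℕ} {x : CatV n m}
    {l : Σ i : Fin n, Fin (m i)} : (caterpillar n m).Adj x (Sum.inr l) ↔ x = Sum.inl l.1 := by
  rcases x with k | _
  · exact ⟨fun h => congrArg Sum.inl (Eq.symm h), fun h => (Sum.inl_injective h).symm⟩
  · exact ⟨False.elim, fun h => Sum.inr_ne_inl h |>.elim⟩

theorem leg_node_structure_general (n : ℕ) (m : Fin n → ℕ)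
    (T : RTree (CatV n m)) (hT : IsSTG (caterpillar n m) T)
    (i : Fin n) (j : Fin (m i)) :
    ((∀ x : CatV n m, T.parent x ≠ some (Sum.inr ⟨i, j⟩)) →
      T.parent (Sum.inr ⟨i, j⟩) = some (Sum.inl i)) ∧
    ((∃ x : CatV n m, T.parent x = some (Sum.inr ⟨i, j⟩)) →
      (∃! x : CatV n m, T.parent x = some (Sum.inr ⟨i, j⟩)) ∧
      T.Anc (Sum.inr ⟨i, j⟩) (Sum.inl i)) := by
  have hspine_leg : (caterpillar n m).Adj (Sum.inl i) (Sum.inr ⟨i, j⟩) :=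
    caterpillar_adj_inr_iff.2 rfl
  constructor
  · intro hleaf
    have hspine_above : T.Anc (Sum.inl i) (Sum.inr ⟨i, j⟩) :=
      (hT.2.2 _ _ (Finset.mem_univ _) (Finset.mem_univ _) hspine_leg).resolve_right
        fun h => Sum.inl_ne_inr (RTree.eq_of_anc_of_forall_parent_ne hleaf h)
    obtain ⟨x, hx⟩ : ∃ x, T.parent (Sum.inr ⟨i, j⟩) = some x := by
      rcases ReflTransGen.cases_head hspine_above with h | ⟨x, hx, -⟩
      · exact (Sum.inr_ne_inl h).elim
      · exact ⟨x, hx⟩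
    obtain ⟨u, hu, hux⟩ := hT.exists_adj_of_parent_eq hx
    rw [RTree.eq_of_anc_of_forall_parent_ne hleaf hu] at hux
    rw [hx, caterpillar_adj_inr_iff.1 hux.symm]
  · rintro ⟨c, hc⟩
    have hspine_below : ∀ d, T.parent d = some (Sum.inr ⟨i, j⟩) → T.Anc d (Sum.inl i) := by
      intro d hd
      obtain ⟨u, hu, hadj⟩ := hT.exists_adj_of_parent_eq hd
      exact caterpillar_adj_inr_iff.1 hadj ▸ hu
    exact ⟨⟨c, hc, fun c' hc' =>
        RTree.eq_of_parent_eq_of_anc hc' hc (hspine_below c' hc') (hspine_below c hc)⟩,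
      ReflTransGen.tail (hspine_below c hc) hc⟩

/-- structure of leg nodes in a search tree on a caterpillar. -/
theorem leg_node_structure (n : ℕ) (hn : 1 ≤ n) (m : Fin n → ℕ)
    (T : RTree (CatV n m)) (hT : IsSTG (caterpillar n m) T)
    (i : Fin n) (j : Fin (m i)) :
    ((∀ x : CatV n m, T.parent x ≠ some (Sum.inr ⟨i, j⟩)) →
      T.parent (Sum.inr ⟨i, j⟩) = some (Sum.inl i)) ∧
    ((∃ x : CatV n m, T.parent x = some (Sum.inr ⟨i, j⟩)) →
      (∃! x : CatV n m, T.parent x = some (Sum.inr ⟨i, j⟩)) ∧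
      T.Anc (Sum.inr ⟨i, j⟩) (Sum.inl i)) :=
  leg_node_structure_general n m T hT i j
end

section
/- Let G be a tree, let T_1 and T_2 be search trees on G, and let U_1,...,U_k ⊆ V(G) be pairwise disjoint sets such that each G[U_i] is connected. Then the rotation distance satisfies d(T_1, T_2) ≥ Σ_{i=1}^{k} d(T_1[U_i], T_2[U_i]), where d(T_1[U_i], T_2[U_i]) denotes the rotation distance between the projections, taken among search trees on G[U_i]. -/
/-!
Induct on the number of rotations. Rotating the edge `(p, c)` changes the ancestor relation in
a controlled way: `p` stops being an ancestor of the vertices below `c` that are not below a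
child handed over to `p`, and `c` becomes an ancestor of the vertices below `p` but not below
`c`; conversely, this change of the ancestor relation determines the rotation. The projection
`T[U]` only sees the ancestor relation on `U`. If `p` and `c` are not both in `U`, then, since
`G` is a tree and `G[U]` is connected, no pair of vertices of `U` is affected, so `T[U]` does
not change. If both are in `U`, a vertex of `U` below `c` loses `p` in `T` exactly when it does
in `T[U]`: a neighbour of `p` below a child of `c` lies on the unique path of `G` from `p` into
that subtree, which runs inside `U`. Hence `T[U]` undergoes the rotation at `(p, c)`. As the
`U_i` are disjoint, every rotation of `T₁` is charged to at most one projection.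
-/

namespace RTree

variable {V : Type} {T : RTree V} {a b v w x y : V}

theorem ext {T T' : RTree V} (hs : T.supp = T'.supp) (hp : T.parent = T'.parent) : T = T' := by
  cases T; cases T'; simp_all

theorem anc_refl (T : RTree V) (a : V) : T.Anc a a := .refl

theorem anc_of_parent (h : T.parent v = some a) : T.Anc a v := .single h

theorem Anc.trans (hab : T.Anc a b) (hbv : T.Anc b v) : T.Anc a v :=
  Relation.ReflTransGen.trans hbv hab

theorem anc_iff : T.Anc a v ↔ a = v ∨ ∃ w, T.parent v = some w ∧ T.Anc a w := by
  rw [Anc, Relation.ReflTransGen.cases_head_iff, eq_comm]; rfl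

theorem anc_iff_of_parent_eq_some (h : T.parent v = some w) : T.Anc a v ↔ a = v ∨ T.Anc a w := by
  simp [anc_iff (v := v), h]

theorem anc_iff_of_parent_eq_none (h : T.parent v = none) : T.Anc a v ↔ a = v := by
  simp [anc_iff (v := v), h]

theorem anc_total (hav : T.Anc a v) (hbv : T.Anc b v) : T.Anc a b ∨ T.Anc b a := by
  induction hbv using Relation.ReflTransGen.head_induction_on generalizing a with
  | refl => exact .inl hav
  | @head v v' hstep hv'b ih =>
    rcases (anc_iff_of_parent_eq_some hstep).1 hav with rfl | hav'
    · exact .inr (Anc.trans hv'b (anc_of_parent hstep))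
    · exact ih hav'

theorem not_anc_of_parent (h : T.parent v = some w) : ¬ T.Anc v w := by
  have key : ∀ x y, T.parent x = some y → T.Anc x y → ∀ r, T.parent r = none →
      ¬ Relation.ReflTransGen (fun a b => T.parent a = some b) x r := by
    intro x y hxy hloop r hr hxr
    induction hxr using Relation.ReflTransGen.head_induction_on generalizing y with
    | refl => simp [hr] at hxy
    | @head x x' hstep _ ih =>
      obtain rfl := Option.some.inj (hxy.symm.trans hstep)
      rcases anc_iff.1 hloop with rfl | ⟨z, hz, hxz⟩
      · exact ih x hxy (anc_refl T x)
      · exact ih z hz (Anc.trans (anc_of_parent hxy) hxz)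
  intro hvw
  obtain ⟨r, -, hr, hvr⟩ := T.reaches_root v (T.mem_of_parent h).1
  exact key v w h hvw r hr hvr

theorem anc_antisymm_s18 (hav : T.Anc a v) (hva : T.Anc v a) : a = v := by
  rcases anc_iff.1 hav with h | ⟨w, hw, haw⟩
  · exact h
  · exact absurd (Anc.trans hva haw) (not_anc_of_parent hw)

theorem StrictAnc.anc (h : T.StrictAnc a v) : T.Anc a v := h.2

theorem StrictAnc.ne (h : T.StrictAnc a v) : a ≠ v := h.1

theorem strictAnc_iff : T.StrictAnc a v ↔ ∃ w, T.parent v = some w ∧ T.Anc a w := by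
  refine ⟨fun h => (anc_iff.1 h.2).resolve_left h.1, fun ⟨w, hw, haw⟩ => ⟨?_, ?_⟩⟩
  · rintro rfl; exact not_anc_of_parent hw haw
  · exact anc_iff.2 (.inr ⟨w, hw, haw⟩)

theorem strictAnc_iff_of_parent_eq_some (h : T.parent v = some w) :
    T.StrictAnc a v ↔ T.Anc a w := by
  simp [strictAnc_iff, h]

theorem strictAnc_of_parent (h : T.parent v = some w) : T.StrictAnc w v :=
  (strictAnc_iff_of_parent_eq_some h).2 (anc_refl T w)

theorem not_anc_of_strictAnc (h : T.StrictAnc a v) : ¬ T.Anc v a :=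
  fun hva => h.ne (anc_antisymm_s18 h.anc hva)

theorem exists_child_anc (h : T.StrictAnc a v) : ∃ x, T.parent x = some a ∧ T.Anc x v := by
  obtain ⟨hne, hav⟩ := h
  induction hav using Relation.ReflTransGen.head_induction_on with
  | refl => exact absurd rfl hne
  | @head v w hstep hwa ih =>
    by_cases hw : a = w
    · exact ⟨v, hw ▸ hstep, anc_refl T v⟩
    · obtain ⟨x, hx, hxw⟩ := ih hw
      exact ⟨x, hx, Anc.trans hxw (anc_of_parent hstep)⟩

theorem eq_of_parent_eq_of_anc_s18 (hx : T.parent x = some a) (hy : T.parent y = some a)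
    (hxv : T.Anc x v) (hyv : T.Anc y v) : x = y := by
  wlog hxy : T.Anc x y generalizing x y
  · exact (this hy hx hyv hxv ((anc_total hxv hyv).resolve_left hxy)).symm
  by_contra hne
  exact not_anc_of_parent hx ((strictAnc_iff_of_parent_eq_some hy).1 ⟨hne, hxy⟩)

theorem parent_eq_of_forall_anc_iff {par : V → Option V} (hpar : ∀ v, par v ≠ some v)
    (h : ∀ a v, T.Anc a v ↔ a = v ∨ ∃ w, par v = some w ∧ T.Anc a w) : T.parent = par := by
  funext v
  cases hv : par v with
  | none =>
    refine Option.eq_none_iff_forall_ne_some.2 fun w hw => (strictAnc_of_parent hw).ne ?_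
    simpa [hv] using (h w v).1 (anc_of_parent hw)
  | some w =>
    have hwv : T.StrictAnc w v :=
      ⟨fun e => hpar v (e ▸ hv), (h w v).2 (.inr ⟨w, hv, anc_refl T w⟩)⟩
    obtain ⟨w', hw', hww'⟩ := strictAnc_iff.1 hwv
    have hw'w : T.Anc w' w := by
      rcases (h w' v).1 (anc_of_parent hw') with e | ⟨u, hu, hw'u⟩
      · exact absurd e (strictAnc_of_parent hw').ne
      · exact Option.some.inj (hv.symm.trans hu) ▸ hw'u
    rw [hw', anc_antisymm_s18 hw'w hww']

theorem anc_of_parent_eq_of_strictAnc (hx : T.parent x = some a) (hay : T.StrictAnc a y)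
    (hxv : T.Anc x v) (hyv : T.Anc y v) : T.Anc x y := by
  rcases anc_total hxv hyv with hxy | hyx
  · exact hxy
  obtain rfl | hne := eq_or_ne y x
  · exact anc_refl T y
  · exact absurd ((strictAnc_iff_of_parent_eq_some hx).1 ⟨hne, hyx⟩) (not_anc_of_strictAnc hay)

section Finite

variable [Finite V]

theorem depth_lt_depth (h : T.StrictAnc a v) : T.depth a < T.depth v :=
  Set.ncard_lt_ncard ⟨fun _ hz => Anc.trans hz h.anc,
    fun hsub => not_anc_of_strictAnc h (hsub (anc_refl T v))⟩ (Set.toFinite _)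

theorem wellFounded_strictAnc : WellFounded T.StrictAnc :=
  Subrelation.wf (fun h => depth_lt_depth h) (measure T.depth).wf

theorem anc_iff_of_forall_iff {R : V → V → Prop}
    (hR : ∀ a v, R a v ↔ a = v ∨ ∃ w, T.parent v = some w ∧ R a w) : T.Anc a v ↔ R a v := by
  induction v using (wellFounded_strictAnc (T := T)).induction with
  | _ v ih =>
    rw [anc_iff, hR]
    exact or_congr_right <| exists_congr fun w =>
      and_congr_right fun hw => ih w (strictAnc_of_parent hw)

theorem exists_nearest_strictAnc {U : Finset V} {z : V} (hz : z ∈ U) (hzv : T.StrictAnc z v) :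
    ∃ w ∈ U, T.StrictAnc w v ∧ ∀ y ∈ U, T.StrictAnc y v → T.Anc y w := by
  obtain ⟨w, ⟨hwU, hwv⟩, hmax⟩ := Set.exists_max_image {w | w ∈ U ∧ T.StrictAnc w v} T.depth
    (Set.toFinite _) ⟨z, hz, hzv⟩
  refine ⟨w, hwU, hwv, fun y hyU hyv => ?_⟩
  rcases anc_total hyv.anc hwv.anc with hyw | hwy
  · exact hyw
  obtain rfl | hne := eq_or_ne w y
  · exact anc_refl T w
  · exact absurd (hmax y ⟨hyU, hyv⟩) (depth_lt_depth ⟨hne, hwy⟩).not_ge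

end Finite

end RTree

open SimpleGraph

section ReachIn

variable {V : Type} {G : SimpleGraph V} {s t : Set V} {u v x : V}

def ReachIn (G : SimpleGraph V) (s : Set V) (u v : V) : Prop :=
  Relation.ReflTransGen (fun a b => G.Adj a b ∧ a ∈ s ∧ b ∈ s) u v

theorem ReachIn.single (h : G.Adj u v) (hu : u ∈ s) (hv : v ∈ s) : ReachIn G s u v :=
  Relation.ReflTransGen.single ⟨h, hu, hv⟩

theorem ReachIn.trans (huv : ReachIn G s u v) (hvx : ReachIn G s v x) : ReachIn G s u x :=
  Relation.ReflTransGen.trans huv hvx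

theorem ReachIn.symm (h : ReachIn G s u v) : ReachIn G s v u := by
  induction h with
  | refl => exact .refl
  | tail _ hstep ih => exact (ReachIn.single hstep.1.symm hstep.2.2 hstep.2.1).trans ih

theorem ReachIn.mono (hst : s ⊆ t) (h : ReachIn G s u v) : ReachIn G t u v := by
  induction h with
  | refl => exact .refl
  | tail _ hstep ih => exact ih.trans (.single hstep.1 (hst hstep.2.1) (hst hstep.2.2))

theorem reachIn_of_walk (ω : G.Walk u v) (hω : ∀ x ∈ ω.support, x ∈ s) : ReachIn G s u v := by
  induction ω with
  | nil => exact .refl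
  | cons h _ ih =>
    simp only [Walk.support_cons, List.mem_cons, forall_eq_or_imp] at hω
    exact (ReachIn.single h hω.1 (hω.2 _ (Walk.start_mem_support _))).trans (ih hω.2)

theorem ReachIn.exists_walk (h : ReachIn G s u v) (hu : u ∈ s) :
    ∃ ω : G.Walk u v, ∀ x ∈ ω.support, x ∈ s := by
  induction h with
  | refl => exact ⟨.nil, by simpa using hu⟩
  | tail _ hstep ih =>
    obtain ⟨ω, hω⟩ := ih
    refine ⟨ω.concat hstep.1, fun x hx => ?_⟩
    simp only [Walk.support_concat, List.mem_append,
      List.mem_singleton] at hx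
    exact hx.elim (hω x) (· ▸ hstep.2.2)

theorem ReachIn.exists_adj_boundary (h : ReachIn G s u v) (hu : u ∈ t) (hv : v ∉ t) :
    ∃ d e, G.Adj d e ∧ d ∈ s ∧ e ∈ s ∧ d ∈ t ∧ e ∉ t := by
  induction h with
  | refl => exact absurd hu hv
  | @tail b e _ hstep ih =>
    by_cases hb : b ∈ t
    · exact ⟨b, e, hstep.1, hstep.2.1, hstep.2.2, hb, hv⟩
    · exact ih hb

theorem connected_induce_iff_reachIn :
    (G.induce s).Connected ↔ s.Nonempty ∧ ∀ u ∈ s, ∀ v ∈ s, ReachIn G s u v := by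
  refine ⟨fun h => ⟨?_, fun u hu v hv => ?_⟩, fun ⟨⟨x, hx⟩, h⟩ => ?_⟩
  · obtain ⟨x⟩ := h.nonempty
    exact ⟨x, x.2⟩
  · obtain ⟨ω⟩ := h.preconnected ⟨u, hu⟩ ⟨v, hv⟩
    have hω : ∀ x ∈ (ω.map (Embedding.induce s).toHom).support, x ∈ s := by
      simp only [Walk.support_map, List.mem_map]
      rintro _ ⟨y, -, rfl⟩
      exact y.2
    exact reachIn_of_walk _ hω
  · have key : ∀ a b, ReachIn G s a b → ∀ (ha : a ∈ s) (hb : b ∈ s),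
        (G.induce s).Reachable ⟨a, ha⟩ ⟨b, hb⟩ := by
      intro a b hab
      induction hab with
      | refl => exact fun _ _ => .rfl
      | tail _ hstep ih =>
        exact fun ha hb => (ih ha hstep.2.1).trans (Adj.reachable (by exact hstep.1))
    have : Nonempty s := ⟨⟨x, hx⟩⟩
    exact .mk fun a b => key a b (h a a.2 b b.2) a.2 b.2

theorem SimpleGraph.IsAcyclic.reachIn_inter (hG : G.IsAcyclic) (hs : ReachIn G s u v)
    (ht : ReachIn G t u v) (hus : u ∈ s) (hut : u ∈ t) : ReachIn G (s ∩ t) u v := by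
  classical
  obtain ⟨ωs, hωs⟩ := hs.exists_walk hus
  obtain ⟨ωt, hωt⟩ := ht.exists_walk hut
  have hpath : ωs.toPath = ωt.toPath := (hG.subsingleton_path _ _).elim _ _
  refine reachIn_of_walk ωs.toPath.val fun x hx => ⟨hωs x (ωs.support_toPath_subset_support hx), ?_⟩
  rw [hpath] at hx
  exact hωt x (ωt.support_toPath_subset_support hx)

/-- The path `p, u, …, x` through `t` is the unique path from `p` to `x`, hence lies in `s`. -/
theorem SimpleGraph.IsAcyclic.mem_of_reachIn_of_adj {p : V} (hG : G.IsAcyclic)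
    (hpx : ReachIn G s p x) (hp : p ∈ s) (hxu : ReachIn G t x u) (hx : x ∈ t) (hpt : p ∉ t)
    (hup : G.Adj u p) :
    u ∈ s := by
  classical
  obtain ⟨ωs, hωs⟩ := hpx.exists_walk hp
  obtain ⟨ωt, hωt⟩ := hxu.exists_walk hx
  have hpath : (Walk.cons hup.symm ωt.toPath.val.reverse).IsPath := by
    refine (Walk.cons_isPath_iff _ _).2 ⟨ωt.toPath.prop.reverse, fun hp' => hpt ?_⟩
    rw [Walk.support_reverse, List.mem_reverse] at hp'
    exact hωt p (ωt.support_toPath_subset_support hp')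
  have hu : u ∈ ωs.toPath.val.support := by
    rw [← (hG.subsingleton_path _ _).elim ⟨_, hpath⟩ ωs.toPath]
    simp
  exact hωs u (ωs.support_toPath_subset_support hu)

end ReachIn

open RTree

theorem restrictG_univ {V : Type} (G : SimpleGraph V) : restrictG G Set.univ = G := by
  ext a b
  simp [restrictG]

namespace IsSTG

variable {V : Type} [Fintype V] {G : SimpleGraph V} {T : RTree V} {U : Finset V} {s : Set V}
  {d e u v w x : V}

theorem anc_or_anc_of_adj (hT : IsSTG G T) (h : G.Adj u v) : T.Anc u v ∨ T.Anc v u :=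
  hT.2.2 u v (Finset.mem_univ u) (Finset.mem_univ v) h

theorem connected_descSet (hT : IsSTG G T) (x : V) : (G.induce (T.descSet x)).Connected := by
  have h := hT.2.1 x (Finset.mem_univ x)
  rwa [Finset.coe_univ, restrictG_univ] at h

theorem reachIn_descSet (hT : IsSTG G T) (hu : T.Anc x u) (hv : T.Anc x v) :
    ReachIn G (T.descSet x) u v :=
  (connected_induce_iff_reachIn.1 (hT.connected_descSet x)).2 u hu v hv

theorem strictAnc_of_adj (hT : IsSTG G T) (h : G.Adj d e) (hd : T.Anc x d) (he : ¬ T.Anc x e) :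
    T.StrictAnc e x := by
  rcases hT.anc_or_anc_of_adj h with hde | hed
  · exact absurd (Anc.trans hd hde) he
  · rcases anc_total hed hd with hex | hxe
    · exact ⟨fun h => he (h ▸ anc_refl T e), hex⟩
    · exact absurd hxe he

theorem exists_adj_strictAnc (hT : IsSTG G T) (h : ReachIn G s u v) (hu : T.Anc x u)
    (hv : ¬ T.Anc x v) : ∃ d e, G.Adj d e ∧ d ∈ s ∧ e ∈ s ∧ T.Anc x d ∧ T.StrictAnc e x := by
  obtain ⟨d, e, hde, hds, hes, hd, he⟩ := h.exists_adj_boundary (t := T.descSet x) hu hv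
  exact ⟨d, e, hde, hds, hes, hd, hT.strictAnc_of_adj hde hd he⟩

theorem exists_adj_of_parent (hT : IsSTG G T) (h : T.parent v = some w) :
    ∃ u, T.Anc v u ∧ G.Adj u w := by
  obtain ⟨d, e, hde, -, hwe, hd, hev⟩ := hT.exists_adj_strictAnc
    (hT.reachIn_descSet (anc_of_parent h) (anc_refl T w)) (anc_refl T v) (not_anc_of_parent h)
  obtain rfl := anc_antisymm_s18 ((strictAnc_iff_of_parent_eq_some h).1 hev) hwe
  exact ⟨d, hd, hde⟩

theorem exists_anc_forall_mem (hT : IsSTG G T) (hU : (G.induce (↑U : Set V)).Connected) :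
    ∃ z ∈ U, ∀ u ∈ U, T.Anc z u := by
  obtain ⟨hne, hreach⟩ := connected_induce_iff_reachIn.1 hU
  obtain ⟨z, hz, hmin⟩ := (wellFounded_strictAnc (T := T)).has_min _ hne
  refine ⟨z, hz, fun u hu => ?_⟩
  induction hreach z hz u hu with
  | refl => exact anc_refl T z
  | tail _ hstep ih =>
    by_contra hzu
    exact hmin _ hstep.2.2 (hT.strictAnc_of_adj hstep.1 (ih hstep.2.1) hzu)

end IsSTG

section Projection

variable {V : Type} [DecidableEq V] {G : SimpleGraph V} {T T' P P' : RTree V}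
  {U : Finset V} {a u v w z : V}

namespace IsProjOn

theorem unique (hP : IsProjOn T U P) (hP' : IsProjOn T U P') : P = P' :=
  RTree.ext (hP.1.trans hP'.1.symm) <| funext fun u => Option.ext fun w => by rw [hP.2, hP'.2]

theorem anc_of_anc [Finite V] (hP : IsProjOn T U P) (ha : a ∈ U) (hv : v ∈ U) (h : T.Anc a v) :
    P.Anc a v := by
  induction v using (wellFounded_strictAnc (T := T)).induction with
  | _ v ih =>
    obtain rfl | hne := eq_or_ne a v
    · exact anc_refl P a
    obtain ⟨w, hw, hwv, hnear⟩ := exists_nearest_strictAnc ha ⟨hne, h⟩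
    exact Anc.trans (ih w hwv hw (hnear a ha ⟨hne, h⟩))
      (anc_of_parent ((hP.2 v w).2 ⟨hv, hw, hwv, hnear⟩))

theorem anc_iff [Finite V] (hP : IsProjOn T U P) :
    P.Anc a v ↔ a = v ∨ (a ∈ U ∧ v ∈ U ∧ T.Anc a v) := by
  refine ⟨fun h => ?_, ?_⟩
  · induction h with
    | refl => exact .inl rfl
    | @tail b c _ hstep ih =>
      obtain ⟨hb, hc, hcb, -⟩ := (hP.2 b c).1 hstep
      refine .inr ⟨hc, ?_, ?_⟩
      · rcases ih with rfl | ⟨-, hv, -⟩ <;> assumption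
      · rcases ih with rfl | ⟨-, -, hbv⟩
        exacts [hcb.anc, Anc.trans hcb.anc hbv]
  · rintro (rfl | ⟨ha, hv, h⟩)
    exacts [anc_refl P a, hP.anc_of_anc ha hv h]

theorem anc (hP : IsProjOn T U P) (h : P.Anc a v) : T.Anc a v := by
  induction h with
  | refl => exact anc_refl T _
  | tail _ hstep ih => exact Anc.trans ((hP.2 _ _).1 hstep).2.2.1.anc ih

theorem anc_iff_of_mem [Finite V] (hP : IsProjOn T U P) (ha : a ∈ U) (hv : v ∈ U) :
    P.Anc a v ↔ T.Anc a v :=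
  ⟨hP.anc, hP.anc_of_anc ha hv⟩

theorem parent_eq_some (hP : IsProjOn T U P) (h : T.parent v = some w) (hv : v ∈ U) (hw : w ∈ U) :
    P.parent v = some w :=
  (hP.2 v w).2 ⟨hv, hw, strictAnc_of_parent h,
    fun _ _ hz => (strictAnc_iff_of_parent_eq_some h).1 hz⟩

theorem of_anc_iff (hP : IsProjOn T U P) (hsupp : T'.supp = T.supp)
    (h : ∀ a ∈ U, ∀ v ∈ U, T'.Anc a v ↔ T.Anc a v) : IsProjOn T' U P := by
  refine ⟨hsupp ▸ hP.1, fun u w => (hP.2 u w).trans ?_⟩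
  refine ⟨fun ⟨hu, hw, ⟨hne, hwu⟩, hnear⟩ => ⟨hu, hw, ⟨hne, (h w hw u hu).2 hwu⟩, ?_⟩,
    fun ⟨hu, hw, ⟨hne, hwu⟩, hnear⟩ => ⟨hu, hw, ⟨hne, (h w hw u hu).1 hwu⟩, ?_⟩⟩
  · exact fun z hz ⟨hzne, hzu⟩ => (h z hz w hw).2 (hnear z hz ⟨hzne, (h z hz u hu).1 hzu⟩)
  · exact fun z hz ⟨hzne, hzu⟩ => (h z hz w hw).1 (hnear z hz ⟨hzne, (h z hz u hu).2 hzu⟩)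

end IsProjOn

open Classical in
noncomputable def projParent (T : RTree V) (U : Finset V) (u : V) : Option V :=
  if h : u ∈ U ∧ ∃ w ∈ U, T.StrictAnc w u ∧ ∀ z ∈ U, T.StrictAnc z u → T.Anc z w
  then some h.2.choose else none

theorem projParent_eq_some_iff : projParent T U u = some w ↔
    u ∈ U ∧ w ∈ U ∧ T.StrictAnc w u ∧ ∀ z ∈ U, T.StrictAnc z u → T.Anc z w := by
  unfold projParent
  split_ifs with h
  · obtain ⟨hw, hwu, hnear⟩ := h.2.choose_spec
    refine ⟨fun e => Option.some.inj e ▸ ⟨h.1, hw, hwu, hnear⟩, fun ⟨_, hw', hw'u, hnear'⟩ => ?_⟩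
    rw [anc_antisymm_s18 (hnear' _ hw hwu) (hnear w hw' hw'u)]
  · exact ⟨nofun, fun ⟨hu, hw, hwu, hnear⟩ => h ⟨hu, w, hw, hwu, hnear⟩⟩

theorem projParent_eq_none_of_forall_anc (hz : ∀ u ∈ U, T.Anc z u) : projParent T U z = none :=
  Option.eq_none_iff_forall_ne_some.2 fun w hw =>
    let ⟨_, hwU, hwz, _⟩ := projParent_eq_some_iff.1 hw
    not_anc_of_strictAnc hwz (hz w hwU)

theorem reflTransGen_projParent [Finite V] (hz : z ∈ U) (hzU : ∀ u ∈ U, T.Anc z u) (hu : u ∈ U) :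
    Relation.ReflTransGen (fun a b => projParent T U a = some b) u z := by
  induction u using (wellFounded_strictAnc (T := T)).induction with
  | _ u ih =>
    obtain rfl | hne := eq_or_ne z u
    · exact .refl
    obtain ⟨w, hw, hwu, hnear⟩ := exists_nearest_strictAnc hz ⟨hne, hzU u hu⟩
    exact .head (projParent_eq_some_iff.2 ⟨hu, hw, hwu, hnear⟩) (ih w hwu hw)

theorem exists_isProjOn [Fintype V] (hT : IsSTG G T) (hU : (G.induce (↑U : Set V)).Connected) :
    ∃ P, IsProjOn T U P := by
  obtain ⟨z, hz, hzU⟩ := hT.exists_anc_forall_mem hU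
  have hmem : ∀ {u}, u ∈ T.supp ∩ U ↔ u ∈ U := by simp [hT.1]
  have hroot : ∀ u ∈ U, projParent T U u = none → u = z := fun u hu h =>
    Relation.ReflTransGen.cases_head_iff.1 (reflTransGen_projParent hz hzU hu) |>.resolve_right
      fun ⟨_, hw, _⟩ => by simp [h] at hw
  refine ⟨⟨T.supp ∩ U, projParent T U, ?_, ?_, ?_, ?_⟩, rfl, fun u w => projParent_eq_some_iff⟩
  · exact fun v hv => Option.eq_none_iff_forall_ne_some.2 fun w hw =>
      hv (hmem.2 (projParent_eq_some_iff.1 hw).1)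
  · exact fun h => ⟨hmem.2 (projParent_eq_some_iff.1 h).1, hmem.2 (projParent_eq_some_iff.1 h).2.1⟩
  · exact fun v hv w hw hv0 hw0 => (hroot v (hmem.1 hv) hv0).trans (hroot w (hmem.1 hw) hw0).symm
  · exact fun v hv => ⟨z, hmem.2 hz, projParent_eq_none_of_forall_anc hzU,
      reflTransGen_projParent hz hzU (hmem.1 hv)⟩

end Projection

section Rotation

variable {V : Type} (G : SimpleGraph V) (T : RTree V) (p c : V)

def IsMovedChild (x : V) : Prop := x ≠ p ∧ T.parent x = some c ∧ ∃ u ∈ T.descSet x, G.Adj u p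

/-- Rotating `(p, c)` removes the ancestor `p` exactly from the vertices `v` with
`LosesAnc G T p c v`, and adds the ancestor `c` exactly to those with `GainsAnc T p c v`. -/
def LosesAnc (v : V) : Prop := T.Anc c v ∧ ¬ ∃ x, IsMovedChild G T p c x ∧ T.Anc x v

def GainsAnc (v : V) : Prop := T.Anc p v ∧ ¬ T.Anc c v

def RotAnc (a v : V) : Prop :=
  (T.Anc a v ∧ ¬ (a = p ∧ LosesAnc G T p c v)) ∨ (a = c ∧ GainsAnc T p c v)

open Classical in
noncomputable def rotParent (x : V) : Option V :=
  if x = c then T.parent p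
  else if x = p then some c
  else if T.parent x = some c then (if ∃ u ∈ T.descSet x, G.Adj u p then some p else some c)
  else T.parent x

variable {G T p c} {T' : RTree V} {a v w x : V}

theorem isRotationAt_iff : IsRotationAt G T T' p c ↔
    T.parent c = some p ∧ T'.supp = T.supp ∧ T'.parent = rotParent G T p c := by
  refine ⟨fun ⟨hpc, hsupp, hc, hp, hch, hoth⟩ => ⟨hpc, hsupp, funext fun x => ?_⟩,
    fun ⟨hpc, hsupp, hpar⟩ => ⟨hpc, hsupp, ?_, ?_, fun x hxp hxc => ?_, fun x hxc hxp hx => ?_⟩⟩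
  · unfold rotParent
    split_ifs with hxc hxp hx hW
    · exact hxc ▸ hc
    · exact hxp ▸ hp
    · exact (hch x hxp hx).1 hW
    · exact (hch x hxp hx).2 hW
    · exact hoth x hxc hxp hx
  all_goals have hpc' : p ≠ c := (strictAnc_of_parent hpc).ne
  · simp [hpar, rotParent]
  · simp [hpar, rotParent, hpc']
  · have hxc' : x ≠ c := (strictAnc_of_parent hxc).ne.symm
    constructor <;> intro hW <;> simp only [hpar, rotParent, hxc', hxp, hxc, hW, if_false,
      if_true]
  · simp [hpar, rotParent, hxc, hxp, hx]

theorem losesAnc_self : LosesAnc G T p c c :=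
  ⟨anc_refl T c, fun ⟨_, ⟨_, hx, _⟩, hxc⟩ => not_anc_of_parent hx hxc⟩

theorem rotAnc_c : RotAnc G T p c a c ↔ T.Anc a c ∧ a ≠ p := by
  have hG : ¬ GainsAnc T p c c := fun h => h.2 (anc_refl T c)
  simp [RotAnc, losesAnc_self (G := G) (p := p), hG]

theorem rotAnc_p (hpc : T.parent c = some p) : RotAnc G T p c a p ↔ T.Anc a p ∨ a = c := by
  have hL : ¬ LosesAnc G T p c p := fun h => not_anc_of_parent hpc h.1
  have hG : GainsAnc T p c p := ⟨anc_refl T p, not_anc_of_parent hpc⟩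
  simp [RotAnc, hL, hG]

theorem rotAnc_of_not_anc (hpc : T.parent c = some p) (hv : ¬ T.Anc p v) :
    RotAnc G T p c a v ↔ T.Anc a v := by
  have hL : ¬ LosesAnc G T p c v := fun h => hv (Anc.trans (anc_of_parent hpc) h.1)
  have hG : ¬ GainsAnc T p c v := fun h => hv h.1
  simp [RotAnc, hL, hG]

theorem rotAnc_of_isMovedChild (hx : IsMovedChild G T p c x) : RotAnc G T p c a x ↔ T.Anc a x := by
  have hL : ¬ LosesAnc G T p c x := fun h => h.2 ⟨x, hx, anc_refl T x⟩
  have hG : ¬ GainsAnc T p c x := fun h => h.2 (anc_of_parent hx.2.1)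
  simp [RotAnc, hL, hG]

theorem losesAnc_iff_of_child (hx : T.parent x = some c) (hxp : x ≠ p) (hxv : T.Anc x v) :
    LosesAnc G T p c v ↔ ¬ ∃ u ∈ T.descSet x, G.Adj u p :=
  ⟨fun h hW => h.2 ⟨x, ⟨hxp, hx, hW⟩, hxv⟩, fun hW => ⟨Anc.trans (anc_of_parent hx) hxv,
    fun ⟨_, hy, hyv⟩ => hW (eq_of_parent_eq_of_anc_s18 hy.2.1 hx hyv hxv ▸ hy.2.2)⟩⟩

theorem rotAnc_of_not_isMovedChild (hx : T.parent x = some c)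
    (hW : ¬ ∃ u ∈ T.descSet x, G.Adj u p) : RotAnc G T p c a x ↔ T.Anc a x ∧ a ≠ p := by
  have hL : LosesAnc G T p c x := ⟨anc_of_parent hx, fun ⟨y, hy, hyx⟩ =>
    hW (eq_of_parent_eq_of_anc_s18 hy.2.1 hx hyx (anc_refl T x) ▸ hy.2.2)⟩
  have hG : ¬ GainsAnc T p c x := fun h => h.2 (anc_of_parent hx)
  simp [RotAnc, hL, hG]

theorem rotAnc_of_parent_eq_none (hvc : v ≠ c) (hvp : v ≠ p) (hv : T.parent v = none) :
    RotAnc G T p c a v ↔ a = v := by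
  have hL : ¬ LosesAnc G T p c v := fun h => hvc ((anc_iff_of_parent_eq_none hv).1 h.1).symm
  have hG : ¬ GainsAnc T p c v := fun h => hvp ((anc_iff_of_parent_eq_none hv).1 h.1).symm
  simp [RotAnc, hL, hG, anc_iff_of_parent_eq_none hv]

theorem rotAnc_of_parent_eq_some (hvc : v ≠ c) (hvp : v ≠ p) (hvc' : T.parent v ≠ some c)
    (hv : T.parent v = some w) : RotAnc G T p c a v ↔ a = v ∨ RotAnc G T p c a w := by
  have hanc : ∀ b, b ≠ v → (T.Anc b v ↔ T.Anc b w) := fun b hb => by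
    simp [anc_iff_of_parent_eq_some hv, hb]
  have hmoved : (∃ x, IsMovedChild G T p c x ∧ T.Anc x v) ↔
      (∃ x, IsMovedChild G T p c x ∧ T.Anc x w) :=
    exists_congr fun x => and_congr_right fun hx =>
      hanc x fun h => hvc' (h ▸ hx.2.1)
  have hL : LosesAnc G T p c v ↔ LosesAnc G T p c w := by
    rw [LosesAnc, LosesAnc, hanc c hvc.symm, hmoved]
  have hG : GainsAnc T p c v ↔ GainsAnc T p c w := by
    rw [GainsAnc, GainsAnc, hanc c hvc.symm, hanc p hvp.symm]
  rw [RotAnc, RotAnc, hL, hG, anc_iff_of_parent_eq_some hv]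
  have : a = v → a ≠ p := fun h => h ▸ hvp
  tauto

theorem rotAnc_iff (hpc : T.parent c = some p) :
    RotAnc G T p c a v ↔ a = v ∨ ∃ w, rotParent G T p c v = some w ∧ RotAnc G T p c a w := by
  have hcp : c ≠ p := (strictAnc_of_parent hpc).ne.symm
  unfold rotParent
  split_ifs with hvc hvp hvx hW
  · subst hvc
    have hparent : (∃ w, T.parent p = some w ∧ RotAnc G T p v a w) ↔ T.StrictAnc a p := by
      rw [strictAnc_iff]
      exact exists_congr fun w => and_congr_right fun hw =>
        rotAnc_of_not_anc hpc (not_anc_of_parent hw)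
    rw [hparent, rotAnc_c, anc_iff_of_parent_eq_some hpc, StrictAnc]
    have : a = v → a ≠ p := fun h => h ▸ hcp
    tauto
  · subst hvp
    simp only [Option.some.injEq, exists_eq_left', rotAnc_p hpc, rotAnc_c,
      anc_iff_of_parent_eq_some hpc]
    have : a = c → a ≠ v := fun h => h ▸ hcp
    have : a = v → T.Anc a v := fun h => h ▸ anc_refl T v
    tauto
  · simp only [Option.some.injEq, exists_eq_left', rotAnc_p hpc,
      rotAnc_of_isMovedChild ⟨hvp, hvx, hW⟩, anc_iff_of_parent_eq_some hvx,
      anc_iff_of_parent_eq_some hpc]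
    tauto
  · simp only [Option.some.injEq, exists_eq_left', rotAnc_c, rotAnc_of_not_isMovedChild hvx hW,
      anc_iff_of_parent_eq_some hvx]
    have : a = v → a ≠ p := fun h => h ▸ hvp
    tauto
  · cases hv : T.parent v with
    | none => simp [rotAnc_of_parent_eq_none hvc hvp hv]
    | some w => simp [rotAnc_of_parent_eq_some hvc hvp hvx hv]

theorem rotParent_ne_self (hpc : T.parent c = some p) (v : V) : rotParent G T p c v ≠ some v := by
  have hcp : c ≠ p := (strictAnc_of_parent hpc).ne.symm
  unfold rotParent
  split_ifs with hvc hvp hvx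
  · exact fun h => not_anc_of_parent hpc (hvc ▸ anc_of_parent h)
  · exact fun h => hcp (hvp ▸ Option.some_inj.1 h)
  · exact fun h => hvp (Option.some_inj.1 h).symm
  · exact fun h => hvc (Option.some_inj.1 h).symm
  · exact fun h => (strictAnc_of_parent h).ne rfl

theorem IsRotationAt.anc_iff [Finite V] (hrot : IsRotationAt G T T' p c) :
    T'.Anc a v ↔ RotAnc G T p c a v := by
  obtain ⟨hpc, -, hpar⟩ := isRotationAt_iff.1 hrot
  exact anc_iff_of_forall_iff fun a v => hpar ▸ rotAnc_iff hpc

theorem isRotationAt_of_anc_iff (hpc : T.parent c = some p) (hsupp : T'.supp = T.supp)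
    (h : ∀ a v, T'.Anc a v ↔ RotAnc G T p c a v) : IsRotationAt G T T' p c := by
  refine isRotationAt_iff.2 ⟨hpc, hsupp, parent_eq_of_forall_anc_iff (rotParent_ne_self hpc)
    fun a v => ?_⟩
  simp only [h]
  exact rotAnc_iff hpc

end Rotation

section RotationSTG

variable {V : Type} [Fintype V] {G : SimpleGraph V} {T T' : RTree V} {p c u v : V}

namespace IsRotationAt

theorem descSet_c (hrot : IsRotationAt G T T' p c) : T'.descSet c = T.descSet p := by
  have hcp : c ≠ p := (strictAnc_of_parent hrot.1).ne.symm
  ext u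
  simp only [descSet, Set.mem_ofPred_eq, hrot.anc_iff, RotAnc, GainsAnc, hcp, false_and,
    not_false_eq_true, and_true, true_and]
  have : T.Anc c u → T.Anc p u := Anc.trans (anc_of_parent hrot.1)
  tauto

theorem descSet_p (hrot : IsRotationAt G T T' p c) :
    T'.descSet p = {u | T.Anc p u ∧ ¬ LosesAnc G T p c u} := by
  have hpc : p ≠ c := (strictAnc_of_parent hrot.1).ne
  ext u
  simp [descSet, hrot.anc_iff, RotAnc, hpc]

theorem descSet_of_ne (hrot : IsRotationAt G T T' p c) (hvc : v ≠ c) (hvp : v ≠ p) :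
    T'.descSet v = T.descSet v := by
  ext u
  simp [descSet, hrot.anc_iff, RotAnc, hvc, hvp]

end IsRotationAt

theorem IsSTG.connected_not_losesAnc (hT : IsSTG G T) (hpc : T.parent c = some p) :
    (G.induce {u | T.Anc p u ∧ ¬ LosesAnc G T p c u}).Connected := by
  set S := {u | T.Anc p u ∧ ¬ LosesAnc G T p c u}
  have hpS : p ∈ S := ⟨anc_refl T p, fun h => not_anc_of_parent hpc h.1⟩
  have reach_of_subset : ∀ x u, T.descSet x ⊆ S → T.Anc x u → (∃ b, T.Anc x b ∧ G.Adj b p) →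
      ReachIn G S u p := fun x u hxS hxu ⟨b, hxb, hbp⟩ =>
    ((hT.reachIn_descSet hxu hxb).mono hxS).trans (.single hbp (hxS hxb) hpS)
  have key : ∀ u ∈ S, ReachIn G S u p := by
    rintro u ⟨hpu, hL⟩
    obtain rfl | hne := eq_or_ne p u
    · exact .refl
    obtain ⟨y, hy, hyu⟩ := exists_child_anc ⟨hne, hpu⟩
    by_cases hyc : y = c
    · obtain ⟨x, ⟨hxp, hx, b, hxb, hbp⟩, hxu⟩ := not_not.1 fun h => hL ⟨hyc ▸ hyu, h⟩
      refine reach_of_subset x u (fun z hxz => ⟨?_, fun h => h.2 ⟨x, ⟨hxp, hx, b, hxb, hbp⟩, hxz⟩⟩)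
        hxu ⟨b, hxb, hbp⟩
      exact Anc.trans (anc_of_parent hpc) (Anc.trans (anc_of_parent hx) hxz)
    · refine reach_of_subset y u (fun z hyz => ⟨Anc.trans (anc_of_parent hy) hyz, fun h => ?_⟩)
        hyu (hT.exists_adj_of_parent hy)
      exact hyc (eq_of_parent_eq_of_anc_s18 hy hpc hyz h.1)
  exact connected_induce_iff_reachIn.2
    ⟨⟨p, hpS⟩, fun u hu v hv => (key u hu).trans (key v hv).symm⟩

theorem IsRotationAt.anc_or_anc_of_adj (hrot : IsRotationAt G T T' p c) (hT : IsSTG G T)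
    (h : G.Adj u v) : T'.Anc u v ∨ T'.Anc v u := by
  wlog huv : T.Anc u v generalizing u v
  · exact (this h.symm ((hT.anc_or_anc_of_adj h).resolve_left huv)).symm
  have hpc := hrot.1
  by_cases hL : u = p ∧ LosesAnc G T p c v
  · obtain ⟨rfl, hcv, hnot⟩ := hL
    obtain rfl | hne := eq_or_ne c v
    · exact .inr (hrot.anc_iff.2 ((rotAnc_p hpc).2 (.inr rfl)))
    obtain ⟨x, hx, hxv⟩ := exists_child_anc ⟨hne, hcv⟩
    have hxp : x ≠ u := fun h => not_anc_of_parent hpc (h ▸ anc_of_parent hx)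
    exact absurd ⟨x, ⟨hxp, hx, v, hxv, h.symm⟩, hxv⟩ hnot
  · exact .inl (hrot.anc_iff.2 (.inl ⟨huv, hL⟩))

theorem IsRotationAt.isSTG (hrot : IsRotationAt G T T' p c) (hT : IsSTG G T) : IsSTG G T' := by
  refine ⟨hrot.2.1.trans hT.1, fun v _ => ?_,
    fun u v _ _ h => hrot.anc_or_anc_of_adj hT h⟩
  rw [Finset.coe_univ, restrictG_univ]
  by_cases hvc : v = c
  · rw [hvc, hrot.descSet_c]
    exact hT.connected_descSet p
  by_cases hvp : v = p
  · rw [hvp, hrot.descSet_p]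
    exact hT.connected_not_losesAnc hrot.1
  · rw [hrot.descSet_of_ne hvc hvp]
    exact hT.connected_descSet v

end RotationSTG

section RotationProjection

variable {V : Type} [Fintype V] {G : SimpleGraph V} {T T' P Q : RTree V}
  {U : Finset V} {p c a u v w x y : V}

namespace IsSTG

theorem not_gainsAnc_of_mem (hG : G.IsAcyclic) (hT : IsSTG G T) (hpc : T.parent c = some p)
    (hU : (G.induce (↑U : Set V)).Connected) (hc : c ∈ U) (hp : p ∉ U) (hw : w ∈ U) :
    ¬ GainsAnc T p c w := by
  rintro ⟨hpw, hcw⟩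
  obtain ⟨y, hy, hyw⟩ := exists_child_anc ⟨(ne_of_mem_of_not_mem hw hp).symm, hpw⟩
  have hyc : ¬ T.Anc y c := fun h => hcw (eq_of_parent_eq_of_anc_s18 hy hpc h (anc_refl T c) ▸ hyw)
  have hreach := hG.reachIn_inter ((connected_induce_iff_reachIn.1 hU).2 w hw c hc)
    (hT.reachIn_descSet hpw (anc_of_parent hpc)) hw hpw
  obtain ⟨-, e, -, -, ⟨heU, hpe⟩, -, hey⟩ := hT.exists_adj_strictAnc hreach hyw hyc
  exact hp (anc_antisymm_s18 ((strictAnc_iff_of_parent_eq_some hy).1 hey) hpe ▸ heU)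

theorem not_losesAnc_of_mem (hG : G.IsAcyclic) (hT : IsSTG G T) (hpc : T.parent c = some p)
    (hU : (G.induce (↑U : Set V)).Connected) (hp : p ∈ U) (hc : c ∉ U) (hw : w ∈ U) :
    ¬ LosesAnc G T p c w := by
  rintro ⟨hcw, hnot⟩
  obtain ⟨x, hx, hxw⟩ := exists_child_anc ⟨(ne_of_mem_of_not_mem hw hc).symm, hcw⟩
  have hpw : T.Anc p w := Anc.trans (anc_of_parent hpc) hcw
  have hxp : ¬ T.Anc x p := fun h => not_anc_of_parent hx (Anc.trans h (anc_of_parent hpc))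
  have hreach := hG.reachIn_inter ((connected_induce_iff_reachIn.1 hU).2 w hw p hp)
    (hT.reachIn_descSet hpw (anc_refl T p)) hw hpw
  obtain ⟨d, e, hde, -, ⟨heU, hpe⟩, hxd, hex⟩ := hT.exists_adj_strictAnc hreach hxw hxp
  rcases (anc_iff_of_parent_eq_some hpc).1 ((strictAnc_iff_of_parent_eq_some hx).1 hex) with
    rfl | hep
  · exact hc heU
  · obtain rfl := anc_antisymm_s18 hep hpe
    exact hnot ⟨x, ⟨fun h => hxp (h ▸ anc_refl T x), hx, d, hxd, hde⟩, hxw⟩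

theorem anc_of_mem_of_anc (hG : G.IsAcyclic) (hT : IsSTG G T)
    (hU : (G.induce (↑U : Set V)).Connected) (hx : x ∈ U) (hyx : T.Anc y x)
    (htop : ∀ z ∈ U, T.Anc y z → ¬ T.StrictAnc z x) (hu : u ∈ U) (hyu : T.Anc y u) :
    T.Anc x u := by
  by_contra hxu
  have hreach := hG.reachIn_inter ((connected_induce_iff_reachIn.1 hU).2 x hx u hu)
    (hT.reachIn_descSet hyx hyu) hx hyx
  obtain ⟨-, e, -, -, ⟨heU, hye⟩, -, hex⟩ := hT.exists_adj_strictAnc hreach (anc_refl T x) hxu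
  exact htop e heU hye hex

end IsSTG

theorem IsRotationAt.anc_iff_of_not_mem (hG : G.IsAcyclic) (hT : IsSTG G T)
    (hrot : IsRotationAt G T T' p c) (hU : (G.induce (↑U : Set V)).Connected)
    (hpc : ¬ (p ∈ U ∧ c ∈ U)) (ha : a ∈ U) (hv : v ∈ U) : T'.Anc a v ↔ T.Anc a v := by
  have hL : ¬ (a = p ∧ LosesAnc G T p c v) := by
    rintro ⟨rfl, hL⟩
    exact hT.not_losesAnc_of_mem hG hrot.1 hU ha (fun hc => hpc ⟨ha, hc⟩) hv hL
  have hG' : ¬ (a = c ∧ GainsAnc T p c v) := by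
    rintro ⟨rfl, hG'⟩
    exact hT.not_gainsAnc_of_mem hG hrot.1 hU ha (fun hp => hpc ⟨hp, ha⟩) hv hG'
  simp [hrot.anc_iff, RotAnc, hL, hG']

variable [DecidableEq V]

theorem IsRotationAt.isProjOn_of_not_mem (hG : G.IsAcyclic) (hT : IsSTG G T)
    (hrot : IsRotationAt G T T' p c) (hU : (G.induce (↑U : Set V)).Connected)
    (hpc : ¬ (p ∈ U ∧ c ∈ U)) (hP : IsProjOn T U P) : IsProjOn T' U P :=
  hP.of_anc_iff hrot.2.1 fun _ ha _ hv => hrot.anc_iff_of_not_mem hG hT hU hpc ha hv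

theorem IsSTG.losesAnc_proj_iff (hG : G.IsAcyclic) (hT : IsSTG G T) (hpc : T.parent c = some p)
    (hU : (G.induce (↑U : Set V)).Connected) (hp : p ∈ U) (hc : c ∈ U) (hP : IsProjOn T U P)
    (hv : v ∈ U) : LosesAnc (restrictG G ↑U) P p c v ↔ LosesAnc G T p c v := by
  have hPpc := hP.parent_eq_some hpc hc hp
  by_cases hcv : T.Anc c v
  swap
  · exact iff_of_false (fun h => hcv ((hP.anc_iff_of_mem hc hv).1 h.1)) (fun h => hcv h.1)
  obtain rfl | hne := eq_or_ne c v
  · exact iff_of_true losesAnc_self losesAnc_self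
  obtain ⟨x₀, hx₀, hx₀v⟩ := exists_child_anc ⟨hne, hcv⟩
  obtain ⟨x, hx, hxv⟩ := exists_child_anc ⟨hne, (hP.anc_iff_of_mem hc hv).2 hcv⟩
  obtain ⟨hxU, -, hcx, hnear⟩ := (hP.2 x c).1 hx
  have hx₀x : T.Anc x₀ x := anc_of_parent_eq_of_strictAnc hx₀ hcx hx₀v (hP.anc hxv)
  have hx₀p : ¬ T.Anc x₀ p := fun h => not_anc_of_parent hx₀ (Anc.trans h (anc_of_parent hpc))
  rw [losesAnc_iff_of_child hx (fun h : x = p => not_anc_of_parent hPpc (h ▸ anc_of_parent hx)) hxv,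
    losesAnc_iff_of_child hx₀ (fun h : x₀ = p => hx₀p (h ▸ anc_refl T x₀)) hx₀v, not_iff_not]
  constructor
  · rintro ⟨u, hxu, hup, -⟩
    exact ⟨u, Anc.trans hx₀x (hP.anc hxu), hup⟩
  · rintro ⟨u, hx₀u, hup⟩
    have huU : u ∈ U := hG.mem_of_reachIn_of_adj ((connected_induce_iff_reachIn.1 hU).2 p hp x hxU)
      hp (hT.reachIn_descSet hx₀x hx₀u) hx₀x hx₀p hup
    have hxu : T.Anc x u := hT.anc_of_mem_of_anc hG hU hxU hx₀x
      (fun z hz hx₀z hzx => not_anc_of_parent hx₀ (Anc.trans hx₀z (hnear z hz hzx))) huU hx₀u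
    exact ⟨u, (hP.anc_iff_of_mem hxU huU).2 hxu, hup, huU, hp⟩

theorem IsProjOn.rotAnc_iff (hP : IsProjOn T U P) (hpc : T.parent c = some p) (hp : p ∈ U)
    (hc : c ∈ U) (hL : ∀ v ∈ U, LosesAnc (restrictG G ↑U) P p c v ↔ LosesAnc G T p c v) :
    RotAnc (restrictG G ↑U) P p c a v ↔ a = v ∨ (a ∈ U ∧ v ∈ U ∧ RotAnc G T p c a v) := by
  by_cases hav : a ∈ U ∧ v ∈ U
  · obtain ⟨ha, hv⟩ := hav
    have hself : a = v → RotAnc G T p c a v := by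
      rintro rfl
      exact .inl ⟨anc_refl T a, fun ⟨hap, h⟩ => not_anc_of_parent hpc (hap ▸ h.1)⟩
    simp only [RotAnc, GainsAnc, hP.anc_iff_of_mem ha hv, hP.anc_iff_of_mem hp hv,
      hP.anc_iff_of_mem hc hv, hL v hv, ha, hv, true_and] at hself ⊢
    tauto
  · have hanc : P.Anc a v ↔ a = v := by
      rw [hP.anc_iff]
      tauto
    have hL' : a = v → ¬ (a = p ∧ LosesAnc (restrictG G ↑U) P p c v) := by
      rintro rfl ⟨rfl, -⟩
      exact hav ⟨hp, hp⟩
    have hG : ¬ (a = c ∧ GainsAnc P p c v) := by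
      rintro ⟨rfl, hpv, -⟩
      exact hav ⟨hc, (hP.anc_iff.1 hpv).elim (· ▸ hp) (·.2.1)⟩
    simp only [RotAnc, hanc, hG, or_false]
    tauto

theorem IsRotationAt.isRotationAt_proj (hG : G.IsAcyclic) (hT : IsSTG G T)
    (hrot : IsRotationAt G T T' p c) (hU : (G.induce (↑U : Set V)).Connected) (hp : p ∈ U)
    (hc : c ∈ U) (hP : IsProjOn T U P) (hQ : IsProjOn T' U Q) :
    IsRotationAt (restrictG G ↑U) P Q p c := by
  refine isRotationAt_of_anc_iff (hP.parent_eq_some hrot.1 hc hp)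
    (by rw [hQ.1, hP.1, hrot.2.1]) fun a v => ?_
  rw [hQ.anc_iff, hP.rotAnc_iff hrot.1 hp hc fun v hv =>
    hT.losesAnc_proj_iff hG hrot.1 hU hp hc hP hv, hrot.anc_iff]

theorem IsRotationAt.reachesIn_proj (hG : G.IsAcyclic) (hT : IsSTG G T)
    (hrot : IsRotationAt G T T' p c) (hU : (G.induce (↑U : Set V)).Connected)
    (hP : IsProjOn T U P) (hQ : IsProjOn T' U Q) :
    ReachesIn (restrictG G ↑U) (if p ∈ U ∧ c ∈ U then 1 else 0) P Q := by
  split_ifs with h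
  · exact ⟨Q, ⟨p, c, hrot.isRotationAt_proj hG hT hU h.1 h.2 hP hQ⟩, rfl⟩
  · exact (hrot.isProjOn_of_not_mem hG hT hU h hP).unique hQ

end RotationProjection

theorem ReachesIn.add {V : Type} {G : SimpleGraph V} {m n : ℕ} {A B C : RTree V}
    (hAB : ReachesIn G m A B) (hBC : ReachesIn G n B C) : ReachesIn G (m + n) A C := by
  induction m generalizing A with
  | zero => exact (zero_add n).symm ▸ (hAB : A = B) ▸ hBC
  | succ m ih =>
    obtain ⟨A', hrot, hA'B⟩ := hAB
    rw [Nat.add_right_comm]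
    exact ⟨A', hrot, ih hA'B⟩

theorem sum_boole_le_one_of_pairwise_disjoint {ι V : Type} [Fintype ι] {U : ι → Finset V}
    (hU : Pairwise (Function.onFun Disjoint U)) {P : ι → Prop} [DecidablePred P] {v : V}
    (hP : ∀ i, P i → v ∈ U i) : ∑ i, (if P i then 1 else 0) ≤ 1 := by
  rw [Finset.sum_boole, Nat.cast_id, Finset.card_le_one]
  intro i hi j hj
  by_contra hij
  exact Finset.disjoint_left.1 (hU hij) (hP i (Finset.mem_filter.1 hi).2)
    (hP j (Finset.mem_filter.1 hj).2)

theorem rotation_distance_projection_lower_general {V : Type} [Fintype V] [DecidableEq V]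
    (G : SimpleGraph V) (hG : G.IsTree)
    (T1 T2 : RTree V) (h1 : IsSTG G T1)
    (K : ℕ) (U : Fin K → Finset V)
    (hdisj : ∀ i j : Fin K, i ≠ j → Disjoint (U i) (U j))
    (hconn : ∀ i : Fin K, (G.induce (↑(U i) : Set V)).Connected)
    (P1 P2 : Fin K → RTree V)
    (hP1 : ∀ i, IsProjOn T1 (U i) (P1 i)) (hP2 : ∀ i, IsProjOn T2 (U i) (P2 i))
    (k : ℕ) (hk : ReachesIn G k T1 T2) :
    ∃ c : Fin K → ℕ,
      (∀ i : Fin K, ReachesIn (restrictG G ↑(U i)) (c i) (P1 i) (P2 i)) ∧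
      ∑ i, c i ≤ k := by
  induction k generalizing T1 P1 with
  | zero => exact ⟨0, fun i => (hP1 i).unique ((hk : T1 = T2) ▸ hP2 i), by simp⟩
  | succ k ih =>
    obtain ⟨T', ⟨p, c, hrot⟩, hk⟩ := hk
    have hT' := hrot.isSTG h1
    choose Q hQ using fun i => exists_isProjOn hT' (hconn i)
    obtain ⟨d, hd, hdk⟩ := ih T' hT' Q hQ hk
    refine ⟨fun i => (if p ∈ U i ∧ c ∈ U i then 1 else 0) + d i,
      fun i => (hrot.reachesIn_proj hG.isAcyclic h1 (hconn i) (hP1 i) (hQ i)).add (hd i), ?_⟩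
    have hcharged := sum_boole_le_one_of_pairwise_disjoint (fun i j => hdisj i j)
      (P := fun i => p ∈ U i ∧ c ∈ U i) fun _ => And.left
    rw [Finset.sum_add_distrib]
    omega

/-- the rotation distance is at least the sum of the rotation distances
of projections onto pairwise disjoint connected vertex sets. -/
theorem rotation_distance_projection_lower {V : Type} [Fintype V] [DecidableEq V]
    (G : SimpleGraph V) (hG : G.IsTree)
    (T1 T2 : RTree V) (h1 : IsSTG G T1) (h2 : IsSTG G T2)
    (K : ℕ) (U : Fin K → Finset V)
    (hdisj : ∀ i j : Fin K, i ≠ j → Disjoint (U i) (U j))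
    (hconn : ∀ i : Fin K, (G.induce (↑(U i) : Set V)).Connected)
    (P1 P2 : Fin K → RTree V)
    (hP1 : ∀ i, IsProjOn T1 (U i) (P1 i)) (hP2 : ∀ i, IsProjOn T2 (U i) (P2 i))
    (k : ℕ) (hk : ReachesIn G k T1 T2) :
    ∃ c : Fin K → ℕ,
      (∀ i : Fin K, ReachesIn (restrictG G ↑(U i)) (c i) (P1 i) (P2 i)) ∧
      ∑ i, c i ≤ k :=
  rotation_distance_projection_lower_general G hG T1 T2 h1 K U hdisj hconn P1 P2 hP1 hP2 k hk
end
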